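/- For every integer n ≥ 2 there exists a set X with |X| = n and a 1-nested compatible set pair system 𝒮 on X with |𝒮| = 3n − 2; that is, the upper bound |𝒮| ≤ 3n − 2 for 1-nested compatible set pair systems is tight. -/

import Mathlib

open Set

variable {X : Type*}

/-- A set pair on `X`: an ordered pair `(S,H)` of subsets of `X` with `S ≠ ∅` and `S ∩ H = ∅`. -/
def IsSetPair (p : Set X × Set X) : Prop :=
  p.1 ≠ ∅ ∧ p.1 ∩ p.2 = ∅

/-- A set pair system on `X`: a collection of set pairs on `X`. -/
def IsSPS (𝒮 : Set (Set X × Set X)) : Prop :=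
  ∀ p ∈ 𝒮, IsSetPair p

/-- The strict relation `<` on set pairs: `(S₁,H₁) < (S₂,H₂)` iff they are distinct and
(a) `S₁ ∪ H₁ ⊆ S₂`, or (b) `S₁ ∪ H₁ ⊆ H₂`, or (c) `S₁ ⊊ S₂` and `H₁ = H₂ ≠ ∅`. -/
def splt (p q : Set X × Set X) : Prop :=
  p ≠ q ∧ (p.1 ∪ p.2 ⊆ q.1 ∨ p.1 ∪ p.2 ⊆ q.2 ∨ (p.1 ⊂ q.1 ∧ p.2 = q.2 ∧ q.2 ≠ ∅))

/-- `(S₁,H₁) ≤ (S₂,H₂)` iff `(S₁,H₁) < (S₂,H₂)` or `(S₁,H₁) = (S₂,H₂)`. -/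
def sple (p q : Set X × Set X) : Prop :=
  splt p q ∨ p = q

/-- Exactly one of four propositions holds. -/
def ExactlyOne4 (a b c d : Prop) : Prop :=
  (a ∧ ¬b ∧ ¬c ∧ ¬d) ∨ (¬a ∧ b ∧ ¬c ∧ ¬d) ∨ (¬a ∧ ¬b ∧ c ∧ ¬d) ∨ (¬a ∧ ¬b ∧ ¬c ∧ d)

/-- Exactly one of three propositions holds. -/
def ExactlyOne3 (a b c : Prop) : Prop :=
  (a ∧ ¬b ∧ ¬c) ∨ (¬a ∧ b ∧ ¬c) ∨ (¬a ∧ ¬b ∧ c)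

/-- A 1-nested compatible set pair system on `X`: a set pair system satisfying (NC1)–(NC5). -/
def OneNestedCompatible (𝒮 : Set (Set X × Set X)) : Prop :=
  IsSPS 𝒮 ∧
  -- (NC1)
  (((Set.univ : Set X), (∅ : Set X)) ∈ 𝒮) ∧
  -- (NC2)
  (∀ x : X, (({x} : Set X), (∅ : Set X)) ∈ 𝒮) ∧
  -- (NC3)
  (∀ p ∈ 𝒮, p.2 ≠ ∅ → ((p.2, (∅ : Set X)) : Set X × Set X) ∈ 𝒮) ∧
  -- (NC4)
  (∀ p ∈ 𝒮, ∀ q ∈ 𝒮, p ≠ q →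
    ExactlyOne4 (splt p q) (splt q p)
      ((p.1 ∪ p.2) ∩ (q.1 ∪ q.2) = ∅)
      (p.1 ∩ q.1 = ∅ ∧ p.2 = q.2 ∧ p.2 ≠ ∅)) ∧
  -- (NC5)
  (¬ ∃ p ∈ 𝒮, ∃ q ∈ 𝒮, ∃ r ∈ 𝒮,
    p.2 = q.2 ∧ q.2 = r.2 ∧ p.2 ≠ ∅ ∧ p.1 ∩ q.1 = ∅ ∧
    (p.1 ∪ q.1 ⊆ r.1 ∨ (p.1 ∪ q.1) ∩ r.1 = ∅))

/-- `p` covers `q` in the partial order `(𝒮,≤)`: an arc from `p` to `q`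
in the Hasse diagram `D(𝒮)`; `p` is a parent of `q`, and `q` is a child of `p`. -/
def SPCovers (𝒮 : Set (Set X × Set X)) (p q : Set X × Set X) : Prop :=
  p ∈ 𝒮 ∧ q ∈ 𝒮 ∧ splt q p ∧ ¬ ∃ r ∈ 𝒮, splt q r ∧ splt r p

/-- `L` is the directed path `P(S,H)` in `D(𝒮)` associated with `(S,H) ∈ 𝒮`, `H ≠ ∅`:
a sequence `(q₀,…,q_m)` of elements of `𝒮` with `m ≥ 2` in which `q_j` covers `q_{j+1}`,
such that `q_m = (H,∅)`, every interior `q_j` (`1 ≤ j ≤ m-1`) has second component `H`,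
`q_i = (S,H)` for some `1 ≤ i ≤ m-1`, and the first element `q₀ = (S₊,H₊)` satisfies
`S ∪ H ⊆ S₊` and `H₊ ≠ H`. -/
def IsSPPath (𝒮 : Set (Set X × Set X)) (S H : Set X) (L : List (Set X × Set X)) : Prop :=
  3 ≤ L.length ∧
  List.Chain' (fun a b => SPCovers 𝒮 a b) L ∧
  L.getLast? = some ((H, (∅ : Set X)) : Set X × Set X) ∧
  (∀ i : ℕ, ∀ p : Set X × Set X, 1 ≤ i → i + 1 < L.length → L[i]? = some p → p.2 = H) ∧
  (∃ i : ℕ, 1 ≤ i ∧ i + 1 < L.length ∧ L[i]? = some ((S, H) : Set X × Set X)) ∧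
  (∃ p : Set X × Set X, L.head? = some p ∧ S ∪ H ⊆ p.1 ∧ p.2 ≠ H)

/-- A directed path in the Hasse diagram `D(𝒮)`: a sequence of at least two elements of `𝒮`
in which each element covers the next. -/
def IsDirPath (𝒮 : Set (Set X × Set X)) (L : List (Set X × Set X)) : Prop :=
  2 ≤ L.length ∧ List.Chain' (fun a b => SPCovers 𝒮 a b) L ∧ ∀ p ∈ L, p ∈ 𝒮

/-! On a finite chain with least element `⊥`, take the `n` singletons `({x}, ∅)`, the `n - 1`
initial segments `(Iic k, ∅)` and the `n - 1` pairs `({k}, Iio k)`, `k ≠ ⊥`. Any two of them either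
have disjoint supports `S ∪ H`, or the support of one lies in a component of the other; and no two
share a nonempty second component, which gives (NC4) and (NC5). (NC3) holds since
`Iio k = Iic (pred k)`. That the four alternatives of (NC4) exclude each other is true of any two
set pairs. -/

section SetPair

variable {p q : Set X × Set X}

lemma IsSetPair.not_fst_subset_snd (hp : IsSetPair p) : ¬ p.1 ⊆ p.2 := fun h =>
  hp.1 (by rw [← inter_eq_left.2 h]; exact hp.2)

lemma IsSetPair.snd_eq_empty_of_subset_fst (hp : IsSetPair p) (h : p.2 ⊆ p.1) : p.2 = ∅ := by
  rw [← inter_eq_right.2 h]; exact hp.2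

lemma splt_asymm (hp : IsSetPair p) (hq : IsSetPair q) (hpq : splt p q) : ¬ splt q p := by
  obtain ⟨hne, h | h | ⟨hS, hH, hH0⟩⟩ := hpq <;> rintro ⟨-, h' | h' | ⟨hS', hH', hH0'⟩⟩ <;>
    (try rw [union_subset_iff] at h) <;> (try rw [union_subset_iff] at h')
  · have hp2 := hp.snd_eq_empty_of_subset_fst (h.2.trans h'.1)
    have hq2 := hq.snd_eq_empty_of_subset_fst (h'.2.trans h.1)
    exact hne (Prod.ext (h.1.antisymm h'.1) (hp2.trans hq2.symm))
  · exact hp.not_fst_subset_snd (h.1.trans h'.1)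
  · exact hH0' (hp.snd_eq_empty_of_subset_fst (h.2.trans hS'.subset))
  · exact hq.not_fst_subset_snd (h'.1.trans h.1)
  · exact hp.not_fst_subset_snd (h.1.trans h'.2)
  · exact hp.not_fst_subset_snd (hH' ▸ h.1)
  · exact hH0 (hq.snd_eq_empty_of_subset_fst (h'.2.trans hS.subset))
  · exact hq.not_fst_subset_snd (hH ▸ h'.1)
  · exact hS.asymm hS'

lemma splt_of_union_subset (hne : p ≠ q) (h : p.1 ∪ p.2 ⊆ q.1 ∨ p.1 ∪ p.2 ⊆ q.2) :
    splt p q :=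
  ⟨hne, h.imp_right .inl⟩

lemma fst_subset_of_splt (h : splt p q) : p.1 ⊆ q.1 ∪ q.2 := by
  obtain ⟨-, h | h | h⟩ := h
  · exact (subset_union_left.trans h).trans subset_union_left
  · exact (subset_union_left.trans h).trans subset_union_right
  · exact h.1.subset.trans subset_union_left

lemma union_inter_union_ne_empty_of_splt (hp : IsSetPair p) (h : splt p q) :
    (p.1 ∪ p.2) ∩ (q.1 ∪ q.2) ≠ ∅ :=
  nonempty_iff_ne_empty.1 <|
    (nonempty_iff_ne_empty.2 hp.1).mono (subset_inter subset_union_left (fst_subset_of_splt h))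

lemma fst_inter_fst_ne_empty_of_splt (hp : IsSetPair p) (h : splt p q) (hH : p.2 = q.2) :
    p.1 ∩ q.1 ≠ ∅ := by
  obtain ⟨-, h | h | h⟩ := h
  · rw [inter_eq_left.2 (subset_union_left.trans h)]; exact hp.1
  · exact absurd (hH ▸ subset_union_left.trans h) hp.not_fst_subset_snd
  · rw [inter_eq_left.2 h.1.subset]; exact hp.1

theorem exactlyOne4_of_isSetPair (hp : IsSetPair p) (hq : IsSetPair q)
    (h : splt p q ∨ splt q p ∨ (p.1 ∪ p.2) ∩ (q.1 ∪ q.2) = ∅) :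
    ExactlyOne4 (splt p q) (splt q p) ((p.1 ∪ p.2) ∩ (q.1 ∪ q.2) = ∅)
      (p.1 ∩ q.1 = ∅ ∧ p.2 = q.2 ∧ p.2 ≠ ∅) := by
  have hpq : splt p q → (p.1 ∪ p.2) ∩ (q.1 ∪ q.2) ≠ ∅ := union_inter_union_ne_empty_of_splt hp
  have hqp : splt q p → (p.1 ∪ p.2) ∩ (q.1 ∪ q.2) ≠ ∅ := by
    rw [inter_comm]; exact union_inter_union_ne_empty_of_splt hq
  rcases h with h | h | h
  · exact .inl ⟨h, splt_asymm hp hq h, hpq h,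
      fun ⟨hd, hH, _⟩ => fst_inter_fst_ne_empty_of_splt hp h hH hd⟩
  · refine .inr (.inl ⟨fun h' => splt_asymm hp hq h' h, h, hqp h, fun ⟨hd, hH, _⟩ => ?_⟩)
    rw [inter_comm] at hd
    exact fst_inter_fst_ne_empty_of_splt hq h hH.symm hd
  · refine .inr (.inr (.inl ⟨fun h' => hpq h' h, fun h' => hqp h' h, h, fun ⟨_, hH, hH0⟩ => ?_⟩))
    exact hH0 (subset_empty_iff.1 <| h ▸ subset_inter subset_union_right (hH ▸ subset_union_right))

end SetPair

section ExtremalSystem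

variable {α : Type*} [LinearOrder α] [OrderBot α] {i j : α ⊕ {k : α // k ≠ ⊥} ⊕ {k : α // k ≠ ⊥}}

def extremalPair : α ⊕ {k : α // k ≠ ⊥} ⊕ {k : α // k ≠ ⊥} → Set α × Set α
  | .inl x => ({x}, ∅)
  | .inr (.inl k) => (Iic k, ∅)
  | .inr (.inr k) => ({k.1}, Iio k)

variable (α) in
def extremalSystem : Set (Set α × Set α) := range extremalPair

lemma Iio_ne_empty_of_ne_bot {k : α} (hk : k ≠ ⊥) : Iio k ≠ ∅ :=
  nonempty_iff_ne_empty.1 ⟨⊥, bot_lt_iff_ne_bot.2 hk⟩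

lemma Iic_ne_singleton_of_ne_bot {k : α} (hk : k ≠ ⊥) (x : α) : Iic k ≠ {x} := by
  intro h
  have h0 : (⊥ : α) ∈ ({x} : Set α) := h ▸ bot_le
  have hk' : k ∈ ({x} : Set α) := h ▸ le_rfl
  exact hk (hk'.trans h0.symm)

variable (i) in
lemma isSetPair_extremalPair : IsSetPair (extremalPair i) := by
  rcases i with x | k | k
  · exact ⟨singleton_ne_empty x, inter_empty _⟩
  · exact ⟨nonempty_iff_ne_empty.1 nonempty_Iic, inter_empty _⟩
  · exact ⟨singleton_ne_empty _, singleton_inter_eq_empty.2 (lt_irrefl _)⟩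

lemma extremalPair_injective : Function.Injective (extremalPair (α := α)) := by
  rintro (x | k | k) (y | l | l) h <;> simp only [extremalPair, Prod.mk.injEq] at h
  · rw [singleton_injective h.1]
  · exact absurd h.1.symm (Iic_ne_singleton_of_ne_bot l.2 x)
  · exact absurd h.2.symm (Iio_ne_empty_of_ne_bot l.2)
  · exact absurd h.1 (Iic_ne_singleton_of_ne_bot k.2 y)
  · rw [Subtype.ext (Iic_injective h.1)]
  · exact absurd h.2.symm (Iio_ne_empty_of_ne_bot l.2)
  · exact absurd h.2 (Iio_ne_empty_of_ne_bot k.2)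
  · exact absurd h.2 (Iio_ne_empty_of_ne_bot k.2)
  · rw [Subtype.ext (singleton_injective h.1)]

lemma Iic_mem_extremalSystem (k : α) : (Iic k, ∅) ∈ extremalSystem α := by
  by_cases hk : k = ⊥
  · exact ⟨.inl ⊥, by rw [hk, Iic_bot]; rfl⟩
  · exact ⟨.inr (.inl ⟨k, hk⟩), rfl⟩

lemma exists_eq_inr_inr_of_snd_ne_empty (h : (extremalPair i).2 ≠ ∅) :
    ∃ k, i = .inr (.inr k) := by
  rcases i with x | k | k
  · exact absurd rfl h
  · exact absurd rfl h
  · exact ⟨k, rfl⟩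

lemma eq_of_extremalPair_snd_eq (h : (extremalPair i).2 = (extremalPair j).2)
    (h0 : (extremalPair i).2 ≠ ∅) : i = j := by
  obtain ⟨k, rfl⟩ := exists_eq_inr_inr_of_snd_ne_empty h0
  obtain ⟨l, rfl⟩ := exists_eq_inr_inr_of_snd_ne_empty (h ▸ h0)
  rw [Subtype.ext (Iio_injective h)]

lemma extremalPair_trichotomy (hij : i ≠ j) :
    splt (extremalPair i) (extremalPair j) ∨ splt (extremalPair j) (extremalPair i) ∨
      ((extremalPair i).1 ∪ (extremalPair i).2) ∩ ((extremalPair j).1 ∪ (extremalPair j).2) = ∅ := by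
  have hne := extremalPair_injective.ne hij
  refine .imp (splt_of_union_subset hne) (.imp_left (splt_of_union_subset hne.symm)) ?_
  rcases i with x | k | k <;> rcases j with y | l | l <;>
    simp only [extremalPair, union_empty, singleton_union, Iio_insert, singleton_subset_iff,
      mem_Iic, mem_Iio, Iic_subset_Iic, Iic_subset_Iio, subset_empty_iff, singleton_inter_eq_empty,
      inter_singleton_eq_empty, mem_singleton_iff, ne_eq, Sum.inr.injEq, Subtype.ext_iff] at hij ⊢ <;>
    by_contra! <;> order

variable (i) in
lemma snd_pair_mem_extremalSystem [PredOrder α] (h : (extremalPair i).2 ≠ ∅) :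
    ((extremalPair i).2, ∅) ∈ extremalSystem α := by
  obtain ⟨k, rfl⟩ := exists_eq_inr_inr_of_snd_ne_empty h
  rw [extremalPair, ← Order.Iic_pred_of_not_isMin (isMin_iff_eq_bot.not.2 k.2)]
  exact Iic_mem_extremalSystem _

theorem oneNestedCompatible_extremalSystem [OrderTop α] [PredOrder α] :
    OneNestedCompatible (extremalSystem α) := by
  refine ⟨?_, Iic_top (α := α) ▸ Iic_mem_extremalSystem ⊤, fun x => ⟨.inl x, rfl⟩, ?_, ?_, ?_⟩
  · rintro _ ⟨i, rfl⟩
    exact isSetPair_extremalPair i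
  · rintro _ ⟨i, rfl⟩
    exact snd_pair_mem_extremalSystem i
  · rintro _ ⟨i, rfl⟩ _ ⟨j, rfl⟩ hne
    exact exactlyOne4_of_isSetPair (isSetPair_extremalPair i) (isSetPair_extremalPair j)
      (extremalPair_trichotomy (ne_of_apply_ne _ hne))
  · rintro ⟨_, ⟨i, rfl⟩, _, ⟨j, rfl⟩, -, -, hij, -, h0, hdisj, -⟩
    rw [eq_of_extremalPair_snd_eq hij h0, inter_self] at hdisj
    exact (isSetPair_extremalPair j).1 hdisj

theorem ncard_extremalSystem [Fintype α] : (extremalSystem α).ncard = 3 * Fintype.card α - 2 := by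
  rw [extremalSystem, ncard_range_of_injective extremalPair_injective, Nat.card_eq_fintype_card]
  have hbot : Fintype.card {k : α // k ≠ ⊥} = Fintype.card α - 1 := by
    rw [Fintype.card_subtype_compl, Fintype.card_subtype_eq]
  have hpos : 0 < Fintype.card α := Fintype.card_pos
  rw [Fintype.card_sum, Fintype.card_sum, hbot]
  omega

end ExtremalSystem

/-- For every `n ≥ 2` there is a set `X` with `|X| = n` and a 1-nested compatible
set pair system `𝒮` on `X` with `|𝒮| = 3n − 2`; the bound `|𝒮| ≤ 3n − 2` is tight. -/
theorem card_bound_tight (n : ℕ) (hn : 2 ≤ n) :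
    ∃ (X : Type) (_ : Fintype X), Fintype.card X = n ∧
      ∃ 𝒮 : Set (Set X × Set X), OneNestedCompatible 𝒮 ∧ 𝒮.ncard = 3 * n - 2 := by
  have : NeZero n := ⟨by omega⟩
  refine ⟨Fin n, inferInstance, Fintype.card_fin n, extremalSystem (Fin n),
    oneNestedCompatible_extremalSystem, ?_⟩
  rw [ncard_extremalSystem, Fintype.card_fin]
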